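/- arXiv:1310.3202 — 6 statements merged into one kernel-verified Lean document; each statement's English description precedes it below -/
import Mathlib

section
/- Let h ∈ F_{q^m}[x] be irreducible of degree r. Identifying the quotient F_{q^m}[x]/(h) with the finite field F_{q^{mr}}, the image modulo h of the set K = {a^q - a : a ∈ F_{q^m}[x]_{<t}} (for any t ≥ r) equals the kernel of the trace map Tr_{F_{q^{mr}}/F_q}. -/
/-!
Additive Hilbert 90 for finite fields: `y ↦ y ^ q - y` is `F`-linear on a finite extension `L`,
its kernel consists of roots of `X ^ q - X` and so has dimension at most one, and its range lies
in the kernel of the (Frobenius-invariant, surjective) trace. Comparing dimensions, the range is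
the whole trace kernel. Reduction modulo `h` loses nothing by restricting to degree `< t`, since
every class has a representative `p % h` of degree `< r ≤ t`.
-/

open Polynomial

namespace FiniteField

variable (K L : Type*) [Field K] [Fintype K] [Field L] [Algebra K L]

noncomputable def artinSchreier : L →ₗ[K] L :=
  (frobeniusAlgHom K L).toLinearMap - LinearMap.id

theorem artinSchreier_apply (y : L) : artinSchreier K L y = y ^ Fintype.card K - y := rfl

variable [Finite L]

theorem finrank_ker_artinSchreier_le_one :
    Module.finrank K (LinearMap.ker (artinSchreier K L)) ≤ 1 := by
  classical
  have := Fintype.ofFinite L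
  have hq : 1 < Fintype.card K := Fintype.one_lt_card
  have hroots : ((LinearMap.ker (artinSchreier K L) : Set L).toFinset).val ⊆
      (X ^ Fintype.card K - X : L[X]).roots := fun y hy => by
    have hy : y ^ Fintype.card K - y = 0 := by simpa [artinSchreier_apply] using hy
    simp [mem_roots (FiniteField.X_pow_card_sub_X_ne_zero L hq), hy]
  have hcard := card_le_degree_of_subset_roots hroots
  rw [X_pow_card_sub_X_natDegree_eq L hq, ← Nat.card_eq_card_toFinset, SetLike.coe_sort_coe,
    Module.natCard_eq_pow_finrank (K := K), Nat.card_eq_fintype_card] at hcard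
  by_contra! h
  exact (Nat.pow_lt_pow_right hq h).not_ge (by simpa using hcard)

theorem range_artinSchreier :
    LinearMap.range (artinSchreier K L) = LinearMap.ker (Algebra.trace K L) := by
  have hle : LinearMap.range (artinSchreier K L) ≤ LinearMap.ker (Algebra.trace K L) := by
    rintro _ ⟨y, rfl⟩
    rw [LinearMap.mem_ker, artinSchreier_apply, map_sub, sub_eq_zero]
    exact Algebra.trace_eq_of_algEquiv (frobeniusAlgEquivOfAlgebraic K L) y
  refine Submodule.eq_of_le_of_finrank_le hle ?_
  have hφ := LinearMap.finrank_range_add_finrank_ker (artinSchreier K L)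
  have htr := LinearMap.finrank_range_add_finrank_ker (Algebra.trace K L)
  rw [LinearMap.range_eq_top.mpr (Algebra.trace_surjective K L), finrank_top,
    Module.finrank_self] at htr
  have := finrank_ker_artinSchreier_le_one K L
  omega

theorem exists_pow_card_sub_self_eq_iff_trace_eq_zero (x : L) :
    (∃ y : L, y ^ Fintype.card K - y = x) ↔ Algebra.trace K L x = 0 := by
  rw [← LinearMap.mem_ker, ← range_artinSchreier]
  rfl

end FiniteField

namespace Polynomial

variable {R : Type*} [Field R]

theorem exists_mem_degreeLT_mk_eq {h : R[X]} (hh : h ≠ 0) {t : ℕ} (ht : h.natDegree ≤ t)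
    (z : R[X] ⧸ Ideal.span {h}) : ∃ a ∈ degreeLT R t, Ideal.Quotient.mk _ a = z := by
  obtain ⟨p, rfl⟩ := Ideal.Quotient.mk_surjective z
  refine ⟨p % h, ?_, ?_⟩
  · rw [mem_degreeLT]
    exact (degree_mod_lt p hh).trans_le ((degree_le_natDegree).trans (by exact_mod_cast ht))
  · rw [Ideal.Quotient.eq, Ideal.mem_span_singleton]
    exact ⟨-(p / h), by rw [EuclideanDomain.mod_eq_sub_mul_div]; ring⟩

end Polynomial

theorem stmt3_general (F E : Type*) [Field F] [Fintype F] [Field E] [Fintype E]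
    [Algebra F E] (q : ℕ) (hq : Fintype.card F = q)
    (h : E[X]) (hirr : Irreducible h) (r t : ℕ) (hr : h.natDegree = r)
    (hrt : r ≤ t) :
    (Ideal.Quotient.mk (Ideal.span {h})) ''
        {p : E[X] | ∃ a ∈ Polynomial.degreeLT E t, p = a ^ q - a}
      = {x : E[X] ⧸ Ideal.span {h} |
          Algebra.trace F (E[X] ⧸ Ideal.span {h}) x = 0} := by
  have := PrincipalIdealRing.isMaximal_of_irreducible hirr
  let := Ideal.Quotient.field (Ideal.span {h})
  have : Module.Finite E (E[X] ⧸ Ideal.span {h}) := (AdjoinRoot.powerBasis hirr.ne_zero).finite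
  have : Finite (E[X] ⧸ Ideal.span {h}) := Module.finite_of_finite E
  ext z
  rw [Set.mem_ofPred_eq, ← FiniteField.exists_pow_card_sub_self_eq_iff_trace_eq_zero, hq]
  constructor
  · rintro ⟨_, ⟨a, -, rfl⟩, rfl⟩
    exact ⟨Ideal.Quotient.mk _ a, by rw [map_sub, map_pow]⟩
  · rintro ⟨y, rfl⟩
    obtain ⟨a, ha, rfl⟩ := exists_mem_degreeLT_mk_eq hirr.ne_zero (hr.trans_le hrt) y
    exact ⟨a ^ q - a, ⟨a, ha, rfl⟩, by rw [map_sub, map_pow]⟩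

/-- For `h` irreducible of degree `r ≤ t`, the image modulo `h` of
`K = {a^q - a : a ∈ F_{q^m}[x]_{<t}}` is the kernel of the trace map of the
field `F_{q^m}[x]/(h) ≅ F_{q^{mr}}` down to `F_q`. -/
theorem stmt3 (F E : Type*) [Field F] [Fintype F] [Field E] [Fintype E]
    [Algebra F E] (q m : ℕ) (hq : Fintype.card F = q)
    (hE : Fintype.card E = q ^ m) (hm : 2 ≤ m)
    (h : E[X]) (hirr : Irreducible h) (r t : ℕ) (hr : h.natDegree = r)
    (hrt : r ≤ t) :
    (Ideal.Quotient.mk (Ideal.span {h})) ''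
        {p : E[X] | ∃ a ∈ Polynomial.degreeLT E t, p = a ^ q - a}
      = {x : E[X] ⧸ Ideal.span {h} |
          Algebra.trace F (E[X] ⧸ Ideal.span {h}) x = 0} :=
  stmt3_general F E q hq h hirr r t hr hrt
end

section
/- Let a ∈ F_{q^m}[x] satisfy a ≡ a^q (mod h^s) where h is irreducible over F_{q^m} and s ≥ 1. Then there exists α ∈ F_q with a ≡ α (mod h^s). -/
/-!
Since `X ^ q - X = ∏_{α ∈ F_q} (X - α)`, substituting `a` gives
`a ^ q - a = ∏_{α ∈ F_q} (a - α)`. The factors `a - α` differ pairwise by nonzero constants, which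
are units of `F_{q^m}[x]`, so the prime `h` divides at most one of them. Hence `h ^ s` divides the
product only if it divides that single factor.
-/

open Polynomial

theorem FiniteField.prod_X_sub_C_eq_X_pow_card_sub_X (F : Type*) [Field F] [Fintype F] :
    ∏ α : F, (X - C α) = (X ^ Fintype.card F - X : F[X]) := by
  have hcard : 1 < Fintype.card F := Fintype.one_lt_card
  have hmonic : (X ^ Fintype.card F - X : F[X]).Monic :=
    monic_X_pow_sub (by simpa using hcard)
  have hroots := FiniteField.roots_X_pow_card_sub_X F
  have hsplit := prod_multiset_X_sub_C_of_monic_of_roots_card_eq hmonic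
    (by rw [hroots, FiniteField.X_pow_card_sub_X_natDegree_eq F hcard]; rfl)
  rwa [hroots] at hsplit

theorem FiniteField.prod_sub_algebraMap_eq_pow_card_sub {F A : Type*} [Field F] [Fintype F]
    [CommRing A] [Algebra F A] (a : A) :
    ∏ α : F, (a - algebraMap F A α) = a ^ Fintype.card F - a := by
  simpa using congrArg (aeval a) (FiniteField.prod_X_sub_C_eq_X_pow_card_sub_X F)

theorem Prime.exists_pow_dvd_sub_of_pow_dvd_prod {R ι : Type*} [CommRing R] [IsDomain R]
    [Fintype ι] [Nonempty ι] {p : R} (hp : Prime p) {c : ι → R}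
    (hc : ∀ i j, i ≠ j → ¬p ∣ c i - c j) {a : R} {n : ℕ}
    (hdvd : p ^ n ∣ ∏ i, (a - c i)) : ∃ i, p ^ n ∣ a - c i := by
  classical
  rcases Nat.eq_zero_or_pos n with rfl | hn
  · exact ⟨Classical.arbitrary ι, by simp⟩
  obtain ⟨i, -, hi⟩ := hp.exists_mem_finset_dvd ((dvd_pow_self p hn.ne').trans hdvd)
  have hrest : ¬p ∣ ∏ j ∈ Finset.univ.erase i, (a - c j) := by
    intro hdvd_rest
    obtain ⟨j, hj, hpj⟩ := hp.exists_mem_finset_dvd hdvd_rest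
    exact hc i j (Finset.ne_of_mem_erase hj).symm (by simpa using dvd_sub hpj hi)
  refine ⟨i, hp.pow_dvd_of_dvd_mul_right n hrest ?_⟩
  rwa [Finset.mul_prod_erase _ (fun j => a - c j) (Finset.mem_univ i)]

theorem stmt5_general (F E : Type*) [Field F] [Fintype F] [Field E]
    [Algebra F E] (q : ℕ) (hq : Fintype.card F = q)
    (h : E[X]) (hirr : Irreducible h) (s : ℕ)
    (a : E[X]) (ha : h ^ s ∣ a ^ q - a) :
    ∃ α : F, h ^ s ∣ a - Polynomial.C (algebraMap F E α) := by
  subst hq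
  have hdistinct : ∀ α β : F, α ≠ β → ¬h ∣ algebraMap F E[X] α - algebraMap F E[X] β := by
    intro α β hαβ hdvd
    rw [← map_sub] at hdvd
    exact hirr.not_dvd_isUnit ((sub_ne_zero.mpr hαβ).isUnit.map _) hdvd
  rw [← FiniteField.prod_sub_algebraMap_eq_pow_card_sub] at ha
  simpa only [Polynomial.algebraMap_apply] using
    hirr.prime.exists_pow_dvd_sub_of_pow_dvd_prod hdistinct ha

/-- If `a ≡ a^q (mod h^s)` with `h` irreducible over `F_{q^m}` and `s ≥ 1`,
then `a` is congruent modulo `h^s` to a constant from `F_q`. -/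
theorem stmt5 (F E : Type*) [Field F] [Fintype F] [Field E] [Fintype E]
    [Algebra F E] (q m : ℕ) (hq : Fintype.card F = q)
    (hE : Fintype.card E = q ^ m) (hm : 1 ≤ m)
    (h : E[X]) (hirr : Irreducible h) (s : ℕ) (hs : 1 ≤ s)
    (a : E[X]) (ha : h ^ s ∣ a ^ q - a) :
    ∃ α : F, h ^ s ∣ a - Polynomial.C (algebraMap F E α) :=
  stmt5_general F E q hq h hirr s a ha
end

section
/- Let r > 1 be an integer, let F_{q^{mr}} be the degree-r extension of F_{q^m}, set e = q^{m-1} + ⋯ + q, and let λ ∈ F_{q^m} be a nonzero element with Tr_{F_{q^m}/F_q}(λ) = 0. Then there exists α ∈ F_{q^{mr}} such that Tr_{F_{q^{mr}}/F_q}(λ α^{e+1}) ≠ 0. -/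
/-!
The `F`-span of the `(e+1)`-th powers in `K` is closed under multiplication, hence a subfield of
`K`. Each fibre of `x ↦ x ^ (e+1)` has at most `e + 1 < q^m` points, so there are more than
`q^(m(r-1)) ≥ q^(mr/2)` such powers, and a subfield that large is all of `K`. If every
`λ α^(e+1)` had trace zero, then `Tr(λ x) = 0` for all `x ∈ K`, contradicting the
nondegeneracy of the trace form.
-/

open Module

theorem LinearMap.eq_zero_of_mem_adjoin_submonoid {R A M : Type*} [CommSemiring R] [Semiring A]
    [Algebra R A] [AddCommMonoid M] [Module R M] (f : A →ₗ[R] M) (S : Submonoid A)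
    (hS : ∀ x ∈ S, f x = 0) {x : A} (hx : x ∈ Algebra.adjoin R (S : Set A)) : f x = 0 := by
  have hle : Subalgebra.toSubmodule (Algebra.adjoin R (S : Set A)) ≤ LinearMap.ker f := by
    rw [Algebra.adjoin_eq_span, Submonoid.closure_eq, Submodule.span_le]
    exact hS
  exact hle hx

theorem Subalgebra.eq_top_of_finrank_lt_two_mul {F K : Type*} [Field F] [Field K] [Algebra F K]
    [FiniteDimensional F K] (V : Subalgebra F K) (h : finrank F K < 2 * finrank F V) : V = ⊤ := by
  let L := (V.isAlgebraic_iff.mpr inferInstance).toIntermediateField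
  have htower : finrank F L * finrank L K = finrank F K := finrank_mul_finrank F L K
  have hL : finrank L K = 1 := by
    have : 0 < finrank L K := finrank_pos
    change _ < 2 * finrank F L at h
    nlinarith
  exact congrArg IntermediateField.toSubalgebra (IntermediateField.finrank_eq_one_iff_eq_top.mp hL)

theorem Subalgebra.eq_top_of_card_lt_sq {F K : Type*} [Field F] [Finite F] [Field K] [Finite K]
    [Algebra F K] (V : Subalgebra F K) (h : Nat.card K < Nat.card V ^ 2) : V = ⊤ := by
  have := Fintype.ofFinite F
  have := Fintype.ofFinite K
  have := Fintype.ofFinite V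
  have : FiniteDimensional F K := .of_finite
  refine V.eq_top_of_finrank_lt_two_mul ?_
  rw [Nat.card_eq_fintype_card, Nat.card_eq_fintype_card, Module.card_eq_pow_finrank (K := F),
    Module.card_eq_pow_finrank (K := F) (V := V), ← pow_mul, mul_comm] at h
  exact (Nat.pow_lt_pow_iff_right Fintype.one_lt_card).mp h

theorem card_le_mul_card_mrange_powMonoidHom {K : Type*} [CommRing K] [IsDomain K] [Finite K]
    {n : ℕ} (hn : 0 < n) :
    Nat.card K ≤ n * Nat.card (MonoidHom.mrange (powMonoidHom n : K →* K)) := by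
  classical
  have := Fintype.ofFinite K
  have h := FiniteField.card_image_polynomial_eval (R := K) (p := Polynomial.X ^ n)
    (by simpa using hn)
  simp only [Polynomial.natDegree_pow, Polynomial.natDegree_X, mul_one, Polynomial.eval_pow,
    Polynomial.eval_X] at h
  rw [Nat.card_eq_fintype_card, ← SetLike.coe_sort_coe, MonoidHom.coe_mrange,
    Nat.card_eq_card_toFinset, Set.toFinset_range]
  exact h

theorem Nat.pow_lt_sq_of_pow_le_mul {Q r n p : ℕ} (hr : 2 ≤ r) (hnQ : n < Q) (h : Q ^ r ≤ n * p) :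
    Q ^ r < p ^ 2 := by
  have hp : Q ^ (r - 1) < p := by
    by_contra! hp
    have : n * p < Q ^ r :=
      calc n * p ≤ n * Q ^ (r - 1) := by gcongr
        _ < Q * Q ^ (r - 1) := Nat.mul_lt_mul_of_pos_right hnQ (pow_pos (by omega) _)
        _ = Q ^ r := by rw [← pow_succ']; congr 1; omega
    omega
  calc Q ^ r ≤ Q ^ (2 * (r - 1)) := Nat.pow_le_pow_right (by omega) (by omega)
    _ = (Q ^ (r - 1)) ^ 2 := by rw [mul_comm, pow_mul]
    _ < p ^ 2 := by gcongr

theorem stmt6_general (F E K : Type*) [Field F] [Fintype F] [Field E] [Field K] [Fintype K]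
    [Algebra F E] [Algebra E K] [Algebra F K]
    (q m r : ℕ) (hq : Fintype.card F = q)
    (hK : Fintype.card K = q ^ (m * r)) (hm : 2 ≤ m) (hr : 1 < r)
    (e : ℕ) (he : e = ∑ i ∈ Finset.Ico 1 m, q ^ i)
    (lam : E) (hlam : lam ≠ 0) :
    ∃ α : K, Algebra.trace F K (algebraMap E K lam * α ^ (e + 1)) ≠ 0 := by
  by_contra! h
  have hq2 : 2 ≤ q := hq ▸ Fintype.one_lt_card
  have hn : e + 1 < q ^ m :=
    calc e + 1 = ∑ i ∈ Finset.range m, q ^ i := by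
          rw [he, Finset.range_eq_Ico, Finset.sum_eq_sum_Ico_succ_bot (a := 0) (by omega),
            pow_zero, add_comm]
      _ < q ^ m := Nat.geomSum_lt hq2 fun _ ↦ Finset.mem_range.mp
  set P := MonoidHom.mrange (powMonoidHom (e + 1) : K →* K)
  have hPK : Nat.card K < Nat.card P ^ 2 := by
    have hcount := card_le_mul_card_mrange_powMonoidHom (K := K) e.succ_pos
    rw [Nat.card_eq_fintype_card, hK, pow_mul] at hcount ⊢
    exact Nat.pow_lt_sq_of_pow_le_mul hr hn hcount
  have hPV : Nat.card P ≤ Nat.card (Algebra.adjoin F (P : Set K)) :=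
    Nat.card_mono (Set.toFinite _) Algebra.subset_adjoin
  have htop : Algebra.adjoin F (P : Set K) = ⊤ :=
    Subalgebra.eq_top_of_card_lt_sq _ (hPK.trans_le (Nat.pow_le_pow_left hPV 2))
  let f : K →ₗ[F] F := Algebra.trace F K ∘ₗ LinearMap.mulLeft F (algebraMap E K lam)
  have hf : ∀ x, f x = 0 := fun x ↦
    f.eq_zero_of_mem_adjoin_submonoid P (by rintro _ ⟨α, rfl⟩; exact h α) (htop ▸ trivial)
  exact hlam <| (algebraMap E K).injective <| by
    simpa using (traceForm_nondegenerate F K).1 _ hf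

/-- For `r > 1`, a nonzero trace-zero `λ ∈ F_{q^m}`, and `e = q^{m-1}+⋯+q`,
there is `α ∈ F_{q^{mr}}` with `Tr_{F_{q^{mr}}/F_q}(λ α^{e+1}) ≠ 0`. -/
theorem stmt6 (F E K : Type*) [Field F] [Fintype F] [Field E] [Fintype E]
    [Field K] [Fintype K] [Algebra F E] [Algebra E K] [Algebra F K]
    [IsScalarTower F E K]
    (q m r : ℕ) (hq : Fintype.card F = q) (hE : Fintype.card E = q ^ m)
    (hK : Fintype.card K = q ^ (m * r)) (hm : 2 ≤ m) (hr : 1 < r)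
    (e : ℕ) (he : e = ∑ i ∈ Finset.Ico 1 m, q ^ i)
    (lam : E) (hlam : lam ≠ 0) (htr : Algebra.trace F E lam = 0) :
    ∃ α : K, Algebra.trace F K (algebraMap E K lam * α ^ (e + 1)) ≠ 0 :=
  stmt6_general F E K q m r hq hK hm hr e he lam hlam
end

section
/- With notation as in the previous statement, the set Z = {z ∈ F_{q^{mr}} : Tr_{F_{q^{mr}}/F_q}(λ z^{e+1}) = 0} is the root set in F_{q^{mr}} of a nonzero polynomial Q(x) = λ x^{R_0} + λ^q x^{R_1} + ⋯ + λ^{q^{mr-1}} x^{R_{mr-1}} whose exponents R_i < q^{mr} are pairwise distinct sums of m distinct powers of q; in particular |Z| < q^{mr}. -/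
/-!
By the Frobenius formula for the trace, `Tr(λ z^{e+1}) = Σ_{i < mr} (λ z^{e+1})^{q^i}`. Since
`e + 1 = 1 + q + ⋯ + q^{m-1}` and `z^{q^{mr}} = z`, the `i`-th term is `λ^{q^i} z^{R_i}`, where the
base-`q` digits of `R_i` are the indicator of the cyclic window `{i, …, i + m - 1}` of `ℤ/mr`.
A window of length `0 < m < mr` determines its starting point, and base-`q` expansions are unique,
so the `R_i` are distinct. Hence `Q` keeps the coefficient `λ` at `x^{R_0}`, and having degree
`< q^{mr}` it has fewer than `q^{mr}` roots.
-/

open Polynomial Finset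

namespace Nat

theorem eq_of_add_mod_eq_add_mod {n i a b : ℕ} (ha : a < n) (hb : b < n)
    (h : i + a ≡ i + b [MOD n]) : a = b := by
  have := Nat.ModEq.add_left_cancel' i h
  rwa [Nat.ModEq, Nat.mod_eq_of_lt ha, Nat.mod_eq_of_lt hb] at this

def cyclicWindow (n m i : ℕ) : Finset ℕ := (range m).image fun j ↦ (i + j) % n

theorem sum_cyclicWindow {M : Type*} [AddCommMonoid M] {n m : ℕ} (hmn : m ≤ n) (i : ℕ)
    (f : ℕ → M) : ∑ k ∈ cyclicWindow n m i, f k = ∑ j ∈ range m, f ((i + j) % n) :=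
  sum_image fun _ ha _ hb ↦ eq_of_add_mod_eq_add_mod (by grind) (by grind)

theorem cyclicWindow_injOn {n m : ℕ} (hm : 0 < m) (hmn : m < n) :
    Set.InjOn (cyclicWindow n m) (Set.Iio n) := by
  intro i hi j hj hij
  simp only [Set.mem_Iio] at hi hj
  -- `i` is the only element of its window whose predecessor mod `n` lies outside it
  have hi_mem : i ∈ cyclicWindow n m j :=
    hij ▸ mem_image.2 ⟨0, mem_range.2 hm, by simp [Nat.mod_eq_of_lt hi]⟩
  obtain ⟨a, ha, rfl⟩ := mem_image.1 hi_mem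
  rcases a with _ | a
  · simp [Nat.mod_eq_of_lt hj]
  have hpred : (j + a) % n ∈ cyclicWindow n m ((j + (a + 1)) % n) :=
    hij ▸ mem_image.2 ⟨a, by grind, rfl⟩
  obtain ⟨c, hc, hc_eq⟩ := mem_image.1 hpred
  have hpred_eq : (j + (a + 1)) % n + (n - 1) ≡ j + a [MOD n] := calc
    _ ≡ j + (a + 1) + (n - 1) [MOD n] := (Nat.mod_modEq _ _).add_right _
    _ = j + a + n := by omega
    _ ≡ j + a [MOD n] := Nat.add_modEq_right
  have hc_lt := mem_range.1 hc
  have := eq_of_add_mod_eq_add_mod (by omega) (by omega) (hc_eq.trans hpred_eq.symm)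
  omega

theorem geomSum_cyclicWindow_injOn {q n m : ℕ} (hq : 2 ≤ q) (hm : 0 < m) (hmn : m < n) :
    Set.InjOn (fun i ↦ ∑ j ∈ range m, q ^ ((i + j) % n)) (Set.Iio n) := by
  intro i hi j hj h
  refine cyclicWindow_injOn hm hmn hi hj (Finset.geomSum_injective hq ?_)
  simpa only [sum_cyclicWindow hmn.le] using h

theorem geomSum_cyclicWindow_lt {q n m : ℕ} (hq : 2 ≤ q) (hn : 0 < n) (hmn : m ≤ n) (i : ℕ) :
    ∑ j ∈ range m, q ^ ((i + j) % n) < q ^ n := by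
  rw [← sum_cyclicWindow hmn]
  refine Nat.geomSum_lt hq fun k hk ↦ ?_
  obtain ⟨j, -, rfl⟩ := mem_image.1 hk
  exact Nat.mod_lt _ hn

end Nat

namespace FiniteField

variable {K : Type*} [Field K] [Fintype K] {q n : ℕ}

theorem pow_pow_mod (hK : Fintype.card K = q ^ n) (z : K) (k : ℕ) :
    z ^ q ^ (k % n) = z ^ q ^ k := by
  conv_rhs => rw [← Nat.div_add_mod k n, pow_add, pow_mul, pow_mul, ← pow_mul, mul_comm,
    pow_mul, ← hK, pow_card_pow]

theorem pow_geomSum_pow (hK : Fintype.card K = q ^ n) (z : K) (m i : ℕ) :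
    (z ^ ∑ j ∈ range m, q ^ j) ^ q ^ i = z ^ ∑ j ∈ range m, q ^ ((i + j) % n) := by
  rw [← pow_mul, sum_mul, ← prod_pow_eq_pow_sum, ← prod_pow_eq_pow_sum]
  refine prod_congr rfl fun j _ ↦ ?_
  rw [← pow_add, pow_pow_mod hK, add_comm]

theorem algebraMap_trace_mul_pow_geomSum (F : Type*) [Field F] [Fintype F]
    [Algebra F K] (hF : Fintype.card F = q) (hK : Fintype.card K = q ^ n) (c z : K) (m : ℕ) :
    algebraMap F K (Algebra.trace F K (c * z ^ ∑ j ∈ range m, q ^ j)) =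
      ∑ i ∈ range n, c ^ q ^ i * z ^ ∑ j ∈ range m, q ^ ((i + j) % n) := by
  have hq : 2 ≤ q := hF ▸ Fintype.one_lt_card
  have hfinrank : Module.finrank F K = n := by
    refine Nat.pow_right_injective hq ?_
    simp only [← hK, Module.card_eq_pow_finrank (K := F) (V := K), hF]
  rw [algebraMap_trace_eq_sum_pow, hfinrank, Nat.card_eq_fintype_card, hF]
  simp only [mul_pow, pow_geomSum_pow hK]

end FiniteField

namespace Polynomial

variable {R ι : Type*} [Semiring R] {s : Finset ι} {d : ι → ℕ}

theorem coeff_sum_C_mul_X_pow_of_injOn (a : ι → R) (hd : Set.InjOn d s) {i : ι} (hi : i ∈ s) :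
    (∑ j ∈ s, C (a j) * X ^ d j).coeff (d i) = a i := by
  classical
  rw [finsetSum_coeff, sum_eq_single_of_mem i hi]
  · simp
  · intro j hj hji
    rw [coeff_C_mul_X_pow, if_neg fun h ↦ hji (hd hi hj h).symm]

theorem natDegree_sum_C_mul_X_pow_lt (a : ι → R) {N : ℕ} (hN : 0 < N) (hd : ∀ i ∈ s, d i < N) :
    (∑ i ∈ s, C (a i) * X ^ d i).natDegree < N :=
  Nat.lt_of_le_sub_one hN <| natDegree_sum_le_of_forall_le _ _ fun i hi ↦
    (natDegree_C_mul_X_pow_le _ _).trans (Nat.le_sub_one_of_lt (hd i hi))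

theorem ncard_setOf_eval_eq_zero_le {K : Type*} [CommRing K] [IsDomain K] {p : K[X]}
    (hp : p ≠ 0) : {z | p.eval z = 0}.ncard ≤ p.natDegree := by
  convert ncard_rootSet_le p K using 2
  ext z
  simp [mem_rootSet, hp]

end Polynomial

theorem stmt7_general (F E K : Type*) [Field F] [Fintype F] [Field E]
    [Field K] [Fintype K] [Algebra E K] [Algebra F K]
    (q m r : ℕ) (hq : Fintype.card F = q)
    (hK : Fintype.card K = q ^ (m * r)) (hm : 2 ≤ m) (hr : 2 ≤ r)
    (e : ℕ) (he : e = ∑ i ∈ Finset.Ico 1 m, q ^ i)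
    (lam : E) (hlam : lam ≠ 0)
    (R : ℕ → ℕ) (hR : ∀ i, R i = ∑ j ∈ Finset.range m, q ^ ((i + j) % (m * r))) :
    (∀ i < m * r, ∀ j < m * r, R i = R j → i = j) ∧
    (∀ i < m * r, R i < q ^ (m * r)) ∧
    (let Q : K[X] := ∑ i ∈ Finset.range (m * r),
        Polynomial.C ((algebraMap E K lam) ^ q ^ i) * Polynomial.X ^ R i
     Q ≠ 0 ∧
     (∀ z : K, Algebra.trace F K (algebraMap E K lam * z ^ (e + 1)) = 0 ↔
        Q.eval z = 0)) ∧
    Nat.card {z : K | Algebra.trace F K (algebraMap E K lam * z ^ (e + 1)) = 0}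
      < q ^ (m * r) := by
  have hq2 : 2 ≤ q := hq ▸ Fintype.one_lt_card
  have hmn : m < m * r := by nlinarith
  have hR_inj : Set.InjOn R (Set.Iio (m * r)) := by
    simpa only [← funext hR] using Nat.geomSum_cyclicWindow_injOn hq2 (by omega) hmn
  have hR_lt : ∀ i, R i < q ^ (m * r) := fun i ↦
    hR i ▸ Nat.geomSum_cyclicWindow_lt hq2 (by omega) hmn.le i
  have he1 : e + 1 = ∑ j ∈ range m, q ^ j := by
    rw [he, sum_range_eq_add_Ico _ (by omega), pow_zero, add_comm]
  set Q : K[X] := ∑ i ∈ range (m * r), C (algebraMap E K lam ^ q ^ i) * X ^ R i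
  have hQ_coeff : Q.coeff (R 0) = algebraMap E K lam ^ q ^ 0 :=
    coeff_sum_C_mul_X_pow_of_injOn (fun i ↦ algebraMap E K lam ^ q ^ i)
      (hR_inj.mono fun i ↦ mem_range.1) (mem_range.2 (by omega))
  have hQ : Q ≠ 0 := fun h ↦ by
    simp [h, eq_comm (a := (0 : K)), hlam] at hQ_coeff
  have htrace (z : K) :
      Algebra.trace F K (algebraMap E K lam * z ^ (e + 1)) = 0 ↔ Q.eval z = 0 := by
    rw [← (algebraMap F K).injective.eq_iff, map_zero, he1,
      FiniteField.algebraMap_trace_mul_pow_geomSum F hq hK]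
    simp [Q, eval_finsetSum, hR]
  refine ⟨fun i hi j hj ↦ @hR_inj i hi j hj, fun i _ ↦ hR_lt i, ⟨hQ, htrace⟩, ?_⟩
  calc Nat.card {z : K | Algebra.trace F K (algebraMap E K lam * z ^ (e + 1)) = 0}
      = {z | Q.eval z = 0}.ncard := by simp only [htrace, Nat.card_coe_set_eq]
    _ ≤ Q.natDegree := ncard_setOf_eval_eq_zero_le hQ
    _ < q ^ (m * r) := natDegree_sum_C_mul_X_pow_lt _ (by positivity) fun i _ ↦ hR_lt i

/-- The set `Z = {z ∈ F_{q^{mr}} : Tr(λ z^{e+1}) = 0}` is the root set of the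
nonzero polynomial `Q = Σ_i λ^{q^i} x^{R_i}` whose pairwise distinct exponents
`R_i < q^{mr}` are sums of `m` distinct powers of `q`; hence `|Z| < q^{mr}`. -/
theorem stmt7 (F E K : Type*) [Field F] [Fintype F] [Field E] [Fintype E]
    [Field K] [Fintype K] [Algebra F E] [Algebra E K] [Algebra F K]
    [IsScalarTower F E K]
    (q m r : ℕ) (hq : Fintype.card F = q) (hE : Fintype.card E = q ^ m)
    (hK : Fintype.card K = q ^ (m * r)) (hm : 2 ≤ m) (hr : 2 ≤ r)
    (e : ℕ) (he : e = ∑ i ∈ Finset.Ico 1 m, q ^ i)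
    (lam : E) (hlam : lam ≠ 0)
    (R : ℕ → ℕ) (hR : ∀ i, R i = ∑ j ∈ Finset.range m, q ^ ((i + j) % (m * r))) :
    (∀ i < m * r, ∀ j < m * r, R i = R j → i = j) ∧
    (∀ i < m * r, R i < q ^ (m * r)) ∧
    (let Q : K[X] := ∑ i ∈ Finset.range (m * r),
        Polynomial.C ((algebraMap E K lam) ^ q ^ i) * Polynomial.X ^ R i
     Q ≠ 0 ∧
     (∀ z : K, Algebra.trace F K (algebraMap E K lam * z ^ (e + 1)) = 0 ↔
        Q.eval z = 0)) ∧
    Nat.card {z : K | Algebra.trace F K (algebraMap E K lam * z ^ (e + 1)) = 0}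
      < q ^ (m * r) :=
  stmt7_general F E K q m r hq hK hm hr e he lam hlam R hR
end

section
/- Let g, h ∈ F_{q^m}[x] be relatively prime with no roots among the entries of a support L of length n. If dim_{F_q} Γ(L,g) = n - a and dim_{F_q} Γ(L,h) = n - b, then dim_{F_q} Γ(L, gh) ≥ n - a - b. -/
open Polynomial

/-- The classical `q`-ary Goppa code with support `L` and Goppa polynomial `G`:
codewords `c ∈ F_q^n` such that `Σ_i c_i/(x - α_i) ≡ 0 mod G`, i.e. `G`
divides `Σ_i c_i Π_{j ≠ i} (x - α_j)`. -/
def goppaCode (F E : Type*) [Field F] [Field E] [Algebra F E]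
    {n : ℕ} (L : Fin n → E) (G : E[X]) : Set (Fin n → F) :=
  {c | G ∣ ∑ i : Fin n, Polynomial.C (algebraMap F E (c i)) *
      ∏ j ∈ Finset.univ.erase i, (Polynomial.X - Polynomial.C (L j))}

def goppaSubmodule (F E : Type*) [Field F] [Field E] [Algebra F E]
    {n : ℕ} (L : Fin n → E) (G : E[X]) : Submodule F (Fin n → F) where
  carrier := goppaCode F E L G
  add_mem' := by
    intro c d hc hd
    simp only [goppaCode, Set.mem_setOf_eq, Pi.add_apply, map_add, add_mul,
      Finset.sum_add_distrib] at *
    exact dvd_add hc hd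
  zero_mem' := by
    simp [goppaCode]
  smul_mem' := by
    intro r c hc
    simp only [goppaCode, Set.mem_setOf_eq, Pi.smul_apply, smul_eq_mul, map_mul] at *
    simp_rw [mul_assoc, ← Finset.mul_sum]
    exact Dvd.dvd.mul_left hc _

/-- If `dim Γ(L,g) = n - a` and `dim Γ(L,h) = n - b` for coprime `g, h`
with no roots in the support, then `dim Γ(L, gh) ≥ n - a - b`. -/
theorem stmt13 (F E : Type*) [Field F] [Fintype F] [Field E] [Fintype E]
    [Algebra F E] (q m : ℕ) (hq : Fintype.card F = q)
    (hE : Fintype.card E = q ^ m) (hm : 1 ≤ m)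
    (n : ℕ) (L : Fin n → E) (hL : Function.Injective L)
    (g h : Polynomial E) (hcop : IsCoprime g h)
    (hg : ∀ i, Polynomial.eval (L i) g ≠ 0)
    (hh : ∀ i, Polynomial.eval (L i) h ≠ 0)
    (a b : ℕ) (ha : a ≤ n) (hb : b ≤ n)
    (hdimg : Module.finrank F (Submodule.span F (goppaCode F E L g)) = n - a)
    (hdimh : Module.finrank F (Submodule.span F (goppaCode F E L h)) = n - b) :
    n - a - b ≤ Module.finrank F (Submodule.span F (goppaCode F E L (g * h))) := by
  have hspan : ∀ G : E[X], Submodule.span F (goppaCode F E L G) = goppaSubmodule F E L G :=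
    fun G => Submodule.span_eq (goppaSubmodule F E L G)
  rw [hspan] at hdimg hdimh ⊢
  have hinf : goppaSubmodule F E L (g * h) = goppaSubmodule F E L g ⊓ goppaSubmodule F E L h := by
    ext c
    constructor
    · intro hc
      exact ⟨dvd_trans (dvd_mul_right g h) hc, dvd_trans (dvd_mul_left h g) hc⟩
    · rintro ⟨h1, h2⟩
      exact hcop.mul_dvd h1 h2
  rw [hinf]
  have key := Submodule.finrank_sup_add_finrank_inf_eq (goppaSubmodule F E L g)
    (goppaSubmodule F E L h)
  have hsup : Module.finrank F ↥(goppaSubmodule F E L g ⊔ goppaSubmodule F E L h) ≤ n := by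
    calc _ ≤ Module.finrank F (Fin n → F) := Submodule.finrank_le _
    _ = n := by simp [Module.finrank_pi]
  omega
end

section
/- Let g ∈ F_{q^m}[x] have no roots in F_{q^m}, let L be a tuple of pairwise distinct elements of F_{q^m}, and set e = q^{m-1}+⋯+q. Then the classical q-ary Goppa codes Γ(L, g^e) and Γ(L, g^{e+1}) are equal. -/
open Polynomial

/-!
Write `Q = q ^ m` and `N = Q - 1`. Multiplying `Σ cᵢ / (X - αᵢ)` by `X ^ Q - X` gives
`T = Σ cᵢ ((X - αᵢ) ^ N - 1)`, which differs from the Goppa numerator by a product of linear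
factors over `F_Q`, all coprime to `g`. So it suffices to show that `g ^ e ∣ T` forces
`g ^ (e + 1) ∣ T`, which can be checked root by root in a splitting field of `g`.

At a root `β` of `g` of multiplicity `a`, the Taylor coefficient of `T` of degree `t ≥ 1` is the
power sum `u (N - t)`, where `u r = Σ cᵢ (αᵢ - β) ^ r`. Since `cᵢ ∈ F_q` and `αᵢ ∈ F_Q`,
`u (q r) = u r ^ q` and `u (Q + j) = u (j + 1) + (β - β ^ Q) u j`. As `β ∉ F_Q`, its conjugate
`β ^ Q` is another root of `T` of the same multiplicity, whence `2 a e ≤ N`. Together with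
`q e + q = e + Q`, these two relations carry the vanishing of `u (N - t)` for `1 ≤ t < a e` over
to `1 ≤ t < a (e + 1)`.
-/

theorem coeff_X_add_C_pow_expChar_pow_sub_one {R : Type*} [CommRing R] [IsDomain R] {p : ℕ}
    [ExpChar R p] (k : ℕ) (γ : R) {t : ℕ} (ht : t ≤ p ^ k - 1) :
    ((X + C γ) ^ (p ^ k - 1)).coeff t = (-γ) ^ (p ^ k - 1 - t) := by
  have hpos : 0 < p ^ k := expChar_pow_pos R p k
  -- `(X + C γ) ^ p ^ k = X ^ p ^ k - C (-γ) ^ p ^ k`, so divide by `X + C γ` as a geometric sum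
  have hgeom : (X + C γ) ^ (p ^ k - 1) =
      ∑ i ∈ Finset.range (p ^ k), C ((-γ) ^ (p ^ k - 1 - i)) * X ^ i := by
    apply mul_right_cancel₀ (X_add_C_ne_zero γ)
    have h := geom_sum₂_mul (X : R[X]) (C (-γ)) (p ^ k)
    rw [← pow_succ, Nat.sub_add_cancel hpos, add_pow_expChar_pow]
    rw [map_neg, sub_neg_eq_add, neg_pow, neg_one_pow_expChar_pow, neg_one_mul,
      sub_neg_eq_add] at h
    simpa only [C_pow, map_neg, mul_comm (X ^ _)] using h.symm
  rw [hgeom, finsetSum_coeff]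
  simp only [coeff_C_mul_X_pow]
  rw [Finset.sum_ite_eq, if_pos (Finset.mem_range.mpr (by omega))]

section ZeroWindow

variable {R : Type*} [Semiring R] {u : ℕ → R} {N : ℕ} {θ : R}

theorem apply_add_mul_eq_zero_of_window (hrec : ∀ j, u (N + 1 + j) = θ * u j + u (j + 1)) :
    ∀ k x, k ≤ x → (∀ y, x ≤ y + k → y ≤ x → u y = 0) → u (x + k * N) = 0 := by
  intro k
  induction k with
  | zero => intro x _ h; simpa using h x (by omega) le_rfl
  | succ k ih =>
    intro x hkx hwin
    have hrw : x + (k + 1) * N = N + 1 + (x - 1 + k * N) := by rw [add_mul]; omega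
    have hrw' : x - 1 + k * N + 1 = x + k * N := by omega
    rw [hrw, hrec, hrw', ih (x - 1) (by omega) (fun y h1 h2 => hwin y (by omega) (by omega)),
      ih x (by omega) (fun y h1 h2 => hwin y (by omega) (by omega)), mul_zero, add_zero]

theorem eq_zero_of_frobenius_of_recurrence [NoZeroDivisors R] {q e a : ℕ} (hqe : q ≤ e)
    (hqR : q * (e + 1) = N + (e + 1)) (hdeg : 2 * (a * e) ≤ N)
    (hfrob : ∀ r, u (q * r) = u r ^ q) (hrec : ∀ j, u (N + 1 + j) = θ * u j + u (j + 1))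
    (hzero : ∀ y, N < y + a * e → y < N → u y = 0) :
    ∀ y, N < y + a * (e + 1) → y < N → u y = 0 := by
  intro y hy hyN
  by_cases hy' : N < y + a * e
  · exact hzero y hy' hyN
  have hq0 : q ≠ 0 := by rintro rfl; omega
  have hae : a ≤ a * e := Nat.le_mul_of_pos_right a (by omega)
  have haq : a < q := by
    by_contra! h
    have := Nat.mul_le_mul_right e h
    nlinarith
  have haR : a * (e + 1) = a * e + a := by ring
  obtain ⟨j, rfl⟩ : ∃ j, y = N + j - a * (e + 1) := ⟨y + a * (e + 1) - N, by omega⟩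
  have hj : 1 ≤ j ∧ j ≤ a := by omega
  have hqj : q ≤ q * j := Nat.le_mul_of_pos_right q (by omega)
  have hqja : q * j < a * (e + 1) :=
    calc q * j ≤ q * a := Nat.mul_le_mul_left q hj.2
      _ < (e + 1) * a := Nat.mul_lt_mul_of_pos_right (by omega) (by omega)
      _ = a * (e + 1) := mul_comm _ _
  -- Frobenius sends the index to `x + k * N`, with `u` vanishing on the window `[x - k, x]`
  have hindex : q * (N + j - a * (e + 1)) =
      (N + q * j - a * (e + 1)) + (q - 1 - a) * N := by
    zify [(by omega : a * (e + 1) ≤ N + j), (by omega : a * (e + 1) ≤ N + q * j),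
      (by omega : a ≤ q - 1), (by omega : 1 ≤ q)]
    have hqRz : (q : ℤ) * (e + 1) = N + (e + 1) := by exact_mod_cast hqR
    linear_combination (-(a : ℤ)) * hqRz
  have hwin := apply_add_mul_eq_zero_of_window hrec (q - 1 - a) (N + q * j - a * (e + 1)) (by omega)
    (fun z h1 h2 => hzero z (by omega) (by omega))
  rw [← hindex, hfrob] at hwin
  exact pow_eq_zero_iff hq0 |>.mp hwin

end ZeroWindow

/-- `(X ^ Q - X) * Σ wᵢ / (X - dᵢ)`, when every `dᵢ` is a root of `X ^ Q - X`. -/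
noncomputable def completedSyndrome {K ι : Type*} [Field K] [Fintype ι] (Q : ℕ) (w d : ι → K) :
    K[X] :=
  ∑ i, C (w i) * ((X - C (d i)) ^ (Q - 1) - 1)

section Syndrome

variable {K ι : Type*} [Field K] [Fintype ι] {Q : ℕ} {w d : ι → K}

theorem natDegree_completedSyndrome_le : (completedSyndrome Q w d).natDegree ≤ Q - 1 := by
  refine natDegree_sum_le_of_forall_le _ _ fun i _ => (natDegree_C_mul_le _ _).trans ?_
  refine (natDegree_sub_le _ _).trans ?_
  simp [natDegree_pow]

theorem map_completedSyndrome {L : Type*} [Field L] (φ : K →+* L) :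
    (completedSyndrome Q w d).map φ = completedSyndrome Q (φ ∘ w) (φ ∘ d) := by
  simp [completedSyndrome, Polynomial.map_sum]

theorem coeff_taylor_completedSyndrome {p : ℕ} [ExpChar K p] (k : ℕ) (β : K) {t : ℕ}
    (ht₀ : 1 ≤ t) (ht : t ≤ p ^ k - 1) :
    (taylor β (completedSyndrome (p ^ k) w d)).coeff t =
      ∑ i, w i * (d i - β) ^ (p ^ k - 1 - t) := by
  simp only [completedSyndrome, map_sum, taylor_mul, taylor_C, map_sub, taylor_pow, taylor_X,
    taylor_one, finsetSum_coeff, coeff_C_mul, coeff_sub, coeff_C, if_neg (by omega : t ≠ 0)]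
  refine Finset.sum_congr rfl fun i _ => ?_
  rw [add_sub_assoc, ← C_sub, coeff_X_add_C_pow_expChar_pow_sub_one k _ ht, neg_sub, sub_zero]

theorem two_mul_rootMultiplicity_le_natDegree {f : K[X]} (hf : f ≠ 0) {φ : K →+* K}
    (hφ : f.map φ = f) {β : K} (hβ : φ β ≠ β) : 2 * rootMultiplicity β f ≤ f.natDegree := by
  set r := rootMultiplicity β f
  have hdvd : (X - C β) ^ r ∣ f := pow_rootMultiplicity_dvd f β
  have hdvd' : (X - C (φ β)) ^ r ∣ f := by
    simpa [hφ] using Polynomial.map_dvd φ hdvd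
  have hcop : IsCoprime ((X - C β) ^ r) ((X - C (φ β)) ^ r) :=
    (isCoprime_X_sub_C_of_isUnit_sub (sub_ne_zero.mpr hβ.symm).isUnit).pow
  have := natDegree_le_of_dvd (hcop.mul_dvd hdvd hdvd') hf
  rwa [natDegree_mul (pow_ne_zero _ (X_sub_C_ne_zero _)) (pow_ne_zero _ (X_sub_C_ne_zero _)),
    natDegree_pow, natDegree_pow, natDegree_X_sub_C, natDegree_X_sub_C, mul_one, ← two_mul] at this

theorem two_mul_rootMultiplicity_completedSyndrome_le {p k : ℕ} [ExpChar K p]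
    (hw : ∀ i, w i ^ p ^ k = w i) (hd : ∀ i, d i ^ p ^ k = d i) {β : K} (hβ : β ^ p ^ k ≠ β)
    (hT : completedSyndrome (p ^ k) w d ≠ 0) :
    2 * rootMultiplicity β (completedSyndrome (p ^ k) w d) ≤ p ^ k - 1 := by
  have hφT : (completedSyndrome (p ^ k) w d).map (iterateFrobenius K p k) =
      completedSyndrome (p ^ k) w d := by
    simp only [map_completedSyndrome, Function.comp_def, iterateFrobenius_def, hw, hd]
  exact (two_mul_rootMultiplicity_le_natDegree hT hφT hβ).trans natDegree_completedSyndrome_le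

theorem le_rootMultiplicity_completedSyndrome {p s m q e a : ℕ} [ExpChar K p] (hq : q = p ^ s)
    (he : q * e + q = e + q ^ m) (hqe : q ≤ e) (hw : ∀ i, w i ^ q = w i)
    (hd : ∀ i, d i ^ q ^ m = d i) {β : K} (hβ : β ^ q ^ m ≠ β)
    (hT : completedSyndrome (q ^ m) w d ≠ 0)
    (ha : a * e ≤ rootMultiplicity β (completedSyndrome (q ^ m) w d)) :
    a * (e + 1) ≤ rootMultiplicity β (completedSyndrome (q ^ m) w d) := by
  obtain rfl | ha₀ := Nat.eq_zero_or_pos a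
  · simp
  have hq₀ : 0 < q := hq ▸ expChar_pow_pos K p s
  have hwQ : ∀ i, w i ^ q ^ m = w i := fun i => by
    simpa only [pow_iterate] using Function.iterate_fixed (f := fun x : K => x ^ q) (hw i) m
  have hQ : q ^ m = p ^ (s * m) := by rw [hq, pow_mul]
  rw [hQ] at he hwQ hd hβ hT ha ⊢
  have hdeg : 2 * (a * e) ≤ p ^ (s * m) - 1 :=
    (Nat.mul_le_mul_left 2 ha).trans (two_mul_rootMultiplicity_completedSyndrome_le hwQ hd hβ hT)
  set T := completedSyndrome (p ^ (s * m)) w d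
  set N := p ^ (s * m) - 1
  have hN : N + 1 = p ^ (s * m) := Nat.sub_add_cancel (expChar_pow_pos K p _)
  set u : ℕ → K := fun r => ∑ i, w i * (d i - β) ^ r
  have hfrob : ∀ r, u (q * r) = u r ^ q := fun r => by
    simp only [u]
    rw [hq, sum_pow_char_pow, ← hq]
    simp only [mul_pow, hw, ← pow_mul, mul_comm r]
  have hrec : ∀ j, u (N + 1 + j) = (β - β ^ p ^ (s * m)) * u j + u (j + 1) := fun j => by
    simp only [u, Finset.mul_sum, ← Finset.sum_add_distrib, pow_add, hN]
    refine Finset.sum_congr rfl fun i _ => ?_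
    rw [sub_pow_expChar_pow, hd]
    ring
  have hcoeff : ∀ t, 1 ≤ t → t ≤ N → (taylor β T).coeff t = u (N - t) :=
    fun t h1 h2 => coeff_taylor_completedSyndrome (s * m) β h1 h2
  rw [rootMultiplicity_eq_natTrailingDegree, ← taylor_apply] at ha ⊢
  have hzero : ∀ y, N < y + a * e → y < N → u y = 0 := fun y h1 h2 => by
    rw [← Nat.sub_sub_self h2.le, ← hcoeff (N - y) (by omega) (by omega)]
    exact coeff_eq_zero_of_lt_natTrailingDegree (by omega)
  have hext :=
    eq_zero_of_frobenius_of_recurrence hqe (by rw [mul_add_one]; omega) hdeg hfrob hrec hzero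
  refine le_natTrailingDegree (by rwa [ne_eq, taylor_eq_zero]) fun t ht => ?_
  obtain rfl | ht₀ := Nat.eq_zero_or_pos t
  · exact coeff_eq_zero_of_lt_natTrailingDegree
      (lt_of_lt_of_le (Nat.mul_pos ha₀ (by omega)) ha)
  have haR : a * (e + 1) = a * e + a := by ring
  have hae : a ≤ a * e := Nat.le_mul_of_pos_right a (by omega)
  rw [hcoeff t ht₀ (by omega)]
  exact hext (N - t) (by omega) (by omega)

end Syndrome

section FiniteField

variable {E : Type*} [Field E] [Fintype E]

theorem splits_X_pow_card_sub_X_self : Splits (X ^ Fintype.card E - X : E[X]) := by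
  rw [splits_iff_card_roots, FiniteField.roots_X_pow_card_sub_X,
    FiniteField.X_pow_card_sub_X_natDegree_eq E Fintype.one_lt_card]
  rfl

theorem prod_univ_X_sub_C_eq_X_pow_card_sub_X : ∏ α : E, (X - C α) = X ^ Fintype.card E - X := by
  have hmonic : (X ^ Fintype.card E - X : E[X]).Monic :=
    monic_X_pow_sub (by rw [degree_X]; exact_mod_cast Fintype.one_lt_card)
  rw [splits_X_pow_card_sub_X_self.eq_prod_roots_of_monic hmonic,
    FiniteField.roots_X_pow_card_sub_X]
  rfl

theorem mem_range_algebraMap_of_pow_card_eq {K : Type*} [Field K] [Algebra E K] {β : K}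
    (hβ : β ^ Fintype.card E = β) : β ∈ (algebraMap E K).range :=
  splits_X_pow_card_sub_X_self.mem_range_of_isRoot
    (FiniteField.X_pow_card_sub_X_ne_zero E Fintype.one_lt_card) (by simp [hβ])

theorem pow_card_ne_self_of_isRoot {K : Type*} [Field K] [Algebra E K] {g : E[X]}
    (hg : ∀ α, g.eval α ≠ 0) {β : K} (hβ : (g.map (algebraMap E K)).IsRoot β) :
    β ^ Fintype.card E ≠ β := by
  intro hfix
  obtain ⟨α, rfl⟩ := mem_range_algebraMap_of_pow_card_eq hfix
  rw [IsRoot, eval_map_algebraMap, aeval_algebraMap_apply, map_eq_zero] at hβ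
  exact hg α hβ

theorem X_sub_C_pow_card_sub_X_sub_C (α : E) :
    (X - C α) ^ Fintype.card E - (X - C α) = X ^ Fintype.card E - X := by
  rw [← FiniteField.expand_card, map_sub, expand_X, expand_C]
  ring

theorem prod_compl_mul_prod_erase_X_sub_C {ι : Type*} [Fintype ι] [DecidableEq ι] [DecidableEq E]
    {L : ι → E} (hL : Function.Injective L) (i : ι) :
    (∏ β ∈ (Finset.univ.image L)ᶜ, (X - C β)) * ∏ j ∈ Finset.univ.erase i, (X - C (L j)) =
      (X - C (L i)) ^ (Fintype.card E - 1) - 1 := by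
  refine mul_left_cancel₀ (X_sub_C_ne_zero (L i)) ?_
  rw [mul_left_comm, Finset.mul_prod_erase _ (fun j => X - C (L j)) (Finset.mem_univ i),
    ← Finset.prod_image (f := fun β => X - C β) (fun x _ y _ h => hL h), Finset.prod_compl_mul_prod,
    prod_univ_X_sub_C_eq_X_pow_card_sub_X, mul_sub_one, ← pow_succ',
    Nat.sub_add_cancel Fintype.card_pos, X_sub_C_pow_card_sub_X_sub_C]

theorem completedSyndrome_eq_mul {ι : Type*} [Fintype ι] [DecidableEq ι] [DecidableEq E]
    {L : ι → E} (hL : Function.Injective L) (w : ι → E) :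
    completedSyndrome (Fintype.card E) w L =
      (∏ β ∈ (Finset.univ.image L)ᶜ, (X - C β)) *
        ∑ i, C (w i) * ∏ j ∈ Finset.univ.erase i, (X - C (L j)) := by
  simp only [completedSyndrome, Finset.mul_sum, mul_left_comm _ (C _),
    prod_compl_mul_prod_erase_X_sub_C hL]

end FiniteField

theorem isCoprime_prod_X_sub_C {K : Type*} [Field K] {g : K[X]} (hg : ∀ α, g.eval α ≠ 0)
    (s : Finset K) : IsCoprime g (∏ β ∈ s, (X - C β)) :=
  IsCoprime.prod_right fun β _ =>
    ((irreducible_X_sub_C β).coprime_iff_not_dvd.mpr (by rw [dvd_iff_isRoot]; exact hg β)).symm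

theorem pow_succ_dvd_completedSyndrome {E ι : Type*} [Field E] [Fintype E] [Fintype ι]
    {p s m q e : ℕ} [ExpChar E p] (hq : q = p ^ s) (hE : Fintype.card E = q ^ m)
    (he : q * e + q = e + q ^ m) (hqe : q ≤ e) {g : E[X]} (hg : ∀ α, g.eval α ≠ 0)
    {w d : ι → E} (hw : ∀ i, w i ^ q = w i) (hdvd : g ^ e ∣ completedSyndrome (q ^ m) w d) :
    g ^ (e + 1) ∣ completedSyndrome (q ^ m) w d := by
  classical
  by_cases hT : completedSyndrome (q ^ m) w d = 0
  · rw [hT]; exact dvd_zero _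
  have hg0 : g ≠ 0 := fun h => hg 0 (by simp [h])
  set K := g.SplittingField
  set ψ := algebraMap E K
  have : ExpChar K p := expChar_of_injective_ringHom ψ.injective p
  rw [← map_dvd_map' ψ, Polynomial.map_pow, map_completedSyndrome] at hdvd ⊢
  have hTK : completedSyndrome (q ^ m) (ψ ∘ w) (ψ ∘ d) ≠ 0 := by
    rwa [← map_completedSyndrome, Polynomial.map_ne_zero_iff ψ.injective]
  have hgK : g.map ψ ≠ 0 := Polynomial.map_ne_zero hg0
  have hsplit : Splits (g.map ψ) := SplittingField.splits g
  refine (hsplit.pow _).dvd_of_roots_le_roots (pow_ne_zero _ hgK) ?_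
  have hroots := Multiset.le_iff_count.mp (roots.le_of_dvd hTK hdvd)
  refine Multiset.le_iff_count.mpr fun β => ?_
  specialize hroots β
  simp only [roots_pow, Multiset.count_nsmul, count_roots] at hroots ⊢
  obtain h0 | hpos := Nat.eq_zero_or_pos (rootMultiplicity β (g.map ψ))
  · simp [h0]
  rw [mul_comm] at hroots ⊢
  exact le_rootMultiplicity_completedSyndrome hq he hqe
    (fun i => by simp [← map_pow, hw]) (fun i => by simp [← map_pow, ← hE, FiniteField.pow_card])
    (hE ▸ pow_card_ne_self_of_isRoot hg ((rootMultiplicity_pos hgK).mp hpos)) hTK hroots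

theorem mul_sum_Ico_one_pow_add (q : ℕ) {m : ℕ} (hm : 1 ≤ m) :
    q * ∑ i ∈ Finset.Ico 1 m, q ^ i + q = ∑ i ∈ Finset.Ico 1 m, q ^ i + q ^ m := by
  have h := geom_sum_Ico_mul (q : ℤ) hm
  zify
  linear_combination h

/-- Main theorem: if `g` has no roots in `F_{q^m}` then
`Γ(L, g^e) = Γ(L, g^{e+1})` where `e = q^{m-1}+⋯+q`. -/
theorem stmt16 (F E : Type*) [Field F] [Fintype F] [Field E] [Fintype E]
    [Algebra F E] (q m : ℕ) (hq : Fintype.card F = q)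
    (hE : Fintype.card E = q ^ m) (hm : 2 ≤ m)
    (e : ℕ) (he : e = ∑ i ∈ Finset.Ico 1 m, q ^ i)
    (n : ℕ) (L : Fin n → E) (hL : Function.Injective L)
    (g : Polynomial E) (hroots : ∀ α : E, Polynomial.eval α g ≠ 0) :
    goppaCode F E L (g ^ e) = goppaCode F E L (g ^ (e + 1)) := by
  classical
  obtain ⟨s, hp, hFs⟩ := FiniteField.card F (ringChar F)
  have : ExpChar F (ringChar F) := .prime hp
  have : ExpChar E (ringChar F) := expChar_of_injective_ringHom (algebraMap F E).injective _
  have hqe : q ≤ e := he ▸ (pow_one q).symm.trans_le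
    (Finset.single_le_sum (f := (q ^ ·)) (by simp) (Finset.mem_Ico.mpr ⟨le_rfl, hm⟩))
  ext c
  have hT := completedSyndrome_eq_mul hL (fun i => algebraMap F E (c i))
  have hdvd_iff : ∀ k, g ^ k ∣ completedSyndrome (q ^ m) (fun i => algebraMap F E (c i)) L ↔
      c ∈ goppaCode F E L (g ^ k) := fun k => by
    rw [← hE, hT]
    exact ⟨((isCoprime_prod_X_sub_C hroots _).pow_left).dvd_of_dvd_mul_left,
      (dvd_mul_of_dvd_right · _)⟩
  rw [← hdvd_iff, ← hdvd_iff]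
  refine ⟨pow_succ_dvd_completedSyndrome (hq ▸ hFs) hE (he ▸ mul_sum_Ico_one_pow_add q (by omega))
    hqe hroots (fun i => by rw [← map_pow, ← hq, FiniteField.pow_card]),
    (pow_dvd_pow g e.le_succ).trans⟩
end
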